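/- arXiv:2405.13994 — 3 statements merged into one kernel-verified Lean document; each statement's English description precedes it below -/
import Mathlib

section
/- Let f be a non-negative submodular function on finite ground set N, let k ≥ 1, let ε ∈ (0,1), and let S, OPT ⊆ N with |OPT \ S| ≤ k. If for every u ∈ N \ S it holds that (1 + ε/k)·f(S) > f(S ∪ {u}), then f(S) ≥ f(S ∪ OPT)/(1 + ε). -/
/-!
Submodularity bounds `f (S ∪ OPT)` by `f S` plus the sum of the marginal gains
`f (S ∪ {u}) - f S` over `u ∈ OPT \ S`. At a local optimum each of these at most `k` gains is
below `(ε / k) f S`, so `f (S ∪ OPT) ≤ (1 + ε) f S`.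
-/

open Finset

section

variable {N : Type*} [DecidableEq N]

def Submodular (f : Finset N → ℝ) : Prop :=
  ∀ S T : Finset N, f (S ∪ T) + f (S ∩ T) ≤ f S + f T

namespace Submodular

variable {f : Finset N → ℝ}

theorem union_le_add_sum_of_disjoint (hf : Submodular f) (S : Finset N) {D : Finset N}
    (hD : Disjoint S D) : f (S ∪ D) ≤ f S + ∑ u ∈ D, (f (insert u S) - f S) := by
  induction D using Finset.induction_on with
  | empty => simp
  | insert a D haD ih =>
    have haS : a ∉ S := fun ha => disjoint_left.mp hD ha (mem_insert_self a D)
    have hSD : Disjoint S D := hD.mono_right (subset_insert a D)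
    have hunion : S ∪ D ∪ insert a S = S ∪ insert a D := by
      ext x; simp only [mem_union, mem_insert]; tauto
    have hinter : (S ∪ D) ∩ insert a S = S := by
      ext x
      simp only [mem_inter, mem_union, mem_insert]
      constructor
      · rintro ⟨hx | hx, rfl | hx'⟩ <;> first | exact hx' | contradiction
      · exact fun hx => ⟨Or.inl hx, Or.inr hx⟩
    have hstep := hf (S ∪ D) (insert a S)
    rw [hunion, hinter] at hstep
    rw [sum_insert haD]
    linarith [ih hSD]

theorem union_le_add_sum_insert_sub (hf : Submodular f) (S T : Finset N) :
    f (S ∪ T) ≤ f S + ∑ u ∈ T \ S, (f (insert u S) - f S) := by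
  rw [← union_sdiff_self_eq_union]
  exact hf.union_le_add_sum_of_disjoint S disjoint_sdiff

theorem union_le_add_card_mul (hf : Submodular f) {S T : Finset N} {c : ℝ}
    (hgain : ∀ u ∈ T \ S, f (insert u S) - f S ≤ c) :
    f (S ∪ T) ≤ f S + #(T \ S) * c :=
  calc f (S ∪ T) ≤ f S + ∑ u ∈ T \ S, (f (insert u S) - f S) :=
        hf.union_le_add_sum_insert_sub S T
    _ ≤ f S + ∑ _u ∈ T \ S, c := by gcongr with u hu; exact hgain u hu
    _ = f S + #(T \ S) * c := by rw [sum_const, nsmul_eq_mul]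

end Submodular

end

theorem stmt_3_general {N : Type*} [DecidableEq N] (f : Finset N → ℝ)
    (hsub : ∀ S T : Finset N, f (S ∪ T) + f (S ∩ T) ≤ f S + f T)
    (hnonneg : ∀ S : Finset N, 0 ≤ f S)
    (k : ℕ) (ε : ℝ) (hε : 0 < ε ∧ ε < 1)
    (S OPT : Finset N) (hcard : (OPT \ S).card ≤ k)
    (hloc : ∀ u : N, u ∉ S → (1 + ε / k) * f S > f (insert u S)) :
    f S ≥ f (S ∪ OPT) / (1 + ε) := by
  have hfS := hnonneg S
  have hunion : f (S ∪ OPT) ≤ f S + #(OPT \ S) * (ε / k * f S) :=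
    Submodular.union_le_add_card_mul hsub fun u hu => by
      linarith [hloc u (mem_sdiff.mp hu).2]
  -- `#(OPT \ S) / k ≤ 1` also when `k = 0`, since then `OPT \ S` is empty.
  have hratio : (#(OPT \ S) : ℝ) / k ≤ 1 :=
    div_le_one_of_le₀ (by exact_mod_cast hcard) k.cast_nonneg
  have hgain : #(OPT \ S) * (ε / k * f S) ≤ ε * f S := by
    calc (#(OPT \ S) : ℝ) * (ε / k * f S) = (#(OPT \ S) / k) * (ε * f S) := by ring
      _ ≤ 1 * (ε * f S) := by gcongr; exact mul_nonneg hε.1.le hfS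
      _ = ε * f S := one_mul _
  rw [ge_iff_le, div_le_iff₀ (by linarith)]
  linarith

theorem stmt_3 {N : Type*} [Fintype N] [DecidableEq N] (f : Finset N → ℝ)
    (hsub : ∀ S T : Finset N, f (S ∪ T) + f (S ∩ T) ≤ f S + f T)
    (hnonneg : ∀ S : Finset N, 0 ≤ f S)
    (k : ℕ) (hk : 1 ≤ k) (ε : ℝ) (hε : 0 < ε ∧ ε < 1)
    (S OPT : Finset N) (hcard : (OPT \ S).card ≤ k)
    (hloc : ∀ u : N, u ∉ S → (1 + ε / k) * f S > f (insert u S)) :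
    f S ≥ f (S ∪ OPT) / (1 + ε) :=
  stmt_3_general f hsub hnonneg k ε hε S OPT hcard hloc
end

section
/- Let f : 2^N → ℝ be a submodular function on a finite ground set N with Lovász extension f̂. Then for every x ∈ [0,1]^N and every random subset D ⊆ N whose marginals agree with x (i.e., P[u ∈ D] = x_u for every u ∈ N), we have f̂(x) ≤ E[f(D)]. -/
open MeasureTheory
open scoped Classical

open Finset Function

/-!
Order `N` by decreasing `x`, breaking ties arbitrarily, and let `w u` be the marginal value of `u`
over the elements ranked before it. Every threshold set `{u | λ ≤ x u}` is an initial segment of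
this ranking, so along it `f` is the modular function `T ↦ f ∅ + ∑_{u ∈ T} w u`; submodularity
(the greedy argument) makes this modular function a lower bound for `f` on all sets. A modular
function has the same value, `f ∅ + ∑ w u x u`, under the threshold integral and under any
distribution with marginals `x`, and the inequality follows by monotonicity of the expectation.
-/

section GreedyChain

variable {N α : Type*} [Fintype N] [LinearOrder α]

def rankPrefix (r : N → α) (u : N) : Finset N := univ.filter fun v => r v < r u

lemma subset_rankPrefix {r : N → α} (hr : Injective r) {a : N} {s : Finset N} (ha : a ∉ s)
    (hmax : ∀ b ∈ s, r b ≤ r a) : s ⊆ rankPrefix r a := fun b hb =>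
  mem_filter.mpr ⟨mem_univ b, (hmax b hb).lt_of_ne (hr.ne (ne_of_mem_of_not_mem hb ha))⟩

variable [DecidableEq N]

def greedyWeight (f : Finset N → ℝ) (r : N → α) (u : N) : ℝ :=
  f (insert u (rankPrefix r u)) - f (rankPrefix r u)

lemma greedyWeight_le_of_subset {f : Finset N → ℝ}
    (hsub : ∀ S T : Finset N, f (S ∪ T) + f (S ∩ T) ≤ f S + f T) (r : N → α) {a : N}
    {s : Finset N} (hs : s ⊆ rankPrefix r a) :
    greedyWeight f r a ≤ f (insert a s) - f s := by
  have ha : a ∉ rankPrefix r a := by simp [rankPrefix]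
  have hunion : rankPrefix r a ∪ insert a s = insert a (rankPrefix r a) := by
    rw [union_insert, union_eq_left.mpr hs]
  have hinter : rankPrefix r a ∩ insert a s = s := by
    rw [inter_insert_of_notMem ha, inter_eq_right.mpr hs]
  have hf := hsub (rankPrefix r a) (insert a s)
  rw [hunion, hinter] at hf
  unfold greedyWeight
  linarith

theorem add_sum_greedyWeight_le {f : Finset N → ℝ}
    (hsub : ∀ S T : Finset N, f (S ∪ T) + f (S ∩ T) ≤ f S + f T) {r : N → α}
    (hr : Injective r) (T : Finset N) : f ∅ + ∑ u ∈ T, greedyWeight f r u ≤ f T := by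
  induction T using Finset.induction_on_max_value r with
  | empty => simp
  | insert a s ha hmax ih =>
    have hstep := greedyWeight_le_of_subset hsub r (subset_rankPrefix hr ha hmax)
    rw [sum_insert ha]
    linarith

theorem add_sum_greedyWeight_eq (f : Finset N → ℝ) {r : N → α} (hr : Injective r)
    {T : Finset N} (hT : ∀ u ∈ T, ∀ v, r v < r u → v ∈ T) :
    f ∅ + ∑ u ∈ T, greedyWeight f r u = f T := by
  induction T using Finset.induction_on_max_value r with
  | empty => simp
  | insert a s ha hmax ih =>
    have hs : s = rankPrefix r a := by
      refine (subset_rankPrefix hr ha hmax).antisymm fun v hv => ?_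
      have hva : r v < r a := (mem_filter.mp hv).2
      exact (mem_insert.mp (hT a (mem_insert_self a s) v hva)).resolve_left
        (ne_of_apply_ne r hva.ne)
    have hs_lower : ∀ u ∈ s, ∀ v, r v < r u → v ∈ s := fun u hu v hvu =>
      (mem_insert.mp (hT u (mem_insert_of_mem hu) v hvu)).resolve_left
        (ne_of_apply_ne r (hvu.trans_le (hmax u hu)).ne)
    rw [sum_insert ha, add_left_comm, ih hs_lower, greedyWeight, ← hs]
    ring

end GreedyChain

lemma exists_injective_rank_antitone {N β : Type*} [Fintype N] [LinearOrder β] (x : N → β) :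
    ∃ r : N → βᵒᵈ ×ₗ Fin (Fintype.card N), Injective r ∧ ∀ u v, r u < r v → x v ≤ x u :=
  ⟨fun u => toLex (OrderDual.toDual (x u), Fintype.equivFin N u),
    fun _ _ h => (Fintype.equivFin N).injective (congrArg Prod.snd (toLex.injective h)),
    fun _ _ h => Prod.Lex.monotone_fst _ _ h.le⟩

lemma intervalIntegral_add_sum_filter_le {N : Type*} [Fintype N] (c : ℝ) (w x : N → ℝ)
    (hx : ∀ u, x u ∈ Set.Icc 0 1) :
    ∫ l in (0:ℝ)..1, (c + ∑ u ∈ univ.filter (fun u => l ≤ x u), w u) = c + ∑ u, w u * x u := by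
  have hind : ∀ u, IntervalIntegrable ({l | l ≤ x u}.indicator fun _ => w u) volume 0 1 :=
    fun u => ⟨intervalIntegrable_const.1.indicator measurableSet_Iic,
      intervalIntegrable_const.2.indicator measurableSet_Iic⟩
  have hsum : IntervalIntegrable (fun l => ∑ u, {l | l ≤ x u}.indicator (fun _ => w u) l)
      volume 0 1 := by
    simpa only [sum_fn] using IntervalIntegrable.sum univ fun u _ => hind u
  have hsum_indicator : ∀ l, ∑ u ∈ univ.filter (fun u => l ≤ x u), w u
      = ∑ u, {l | l ≤ x u}.indicator (fun _ => w u) l := by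
    intro l
    simp [sum_filter, Set.indicator_apply]
  simp_rw [hsum_indicator]
  rw [intervalIntegral.integral_add intervalIntegrable_const hsum,
    intervalIntegral.integral_finsetSum fun u _ => hind u]
  simp [intervalIntegral.integral_indicator (hx _), mul_comm]

section RandomFinset

variable {ι Ω : Type*} [Fintype ι] [MeasurableSpace Ω] {μ : Measure Ω} {D : Ω → Finset ι}

lemma measurableSet_mem_of_measurableSet_eq (hD : ∀ s, MeasurableSet {ω | D ω = s}) (u : ι) :
    MeasurableSet {ω | u ∈ D ω} := by
  have hunion : {ω | u ∈ D ω} = ⋃ s ∈ {s : Finset ι | u ∈ s}, {ω | D ω = s} := by ext; simp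
  rw [hunion]
  exact .biUnion (Set.to_countable _) fun s _ => hD s

lemma integrable_comp_of_measurableSet_eq [IsFiniteMeasure μ]
    (hD : ∀ s, MeasurableSet {ω | D ω = s}) (g : Finset ι → ℝ) :
    Integrable (fun ω => g (D ω)) μ := by
  have hsum_indicator : (fun ω => g (D ω)) = fun ω => ∑ s, {ω | D ω = s}.indicator (fun _ => g s) ω := by
    ext ω
    simp [Set.indicator_apply]
  rw [hsum_indicator]
  exact integrable_finsetSum _ fun s _ => (integrable_const (g s)).indicator (hD s)

lemma integral_add_sum_mem [IsProbabilityMeasure μ] (hD : ∀ s, MeasurableSet {ω | D ω = s})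
    (c : ℝ) (w : ι → ℝ) :
    ∫ ω, (c + ∑ u ∈ D ω, w u) ∂μ = c + ∑ u, w u * μ.real {ω | u ∈ D ω} := by
  have hmem := measurableSet_mem_of_measurableSet_eq hD
  have hsum_indicator : ∀ ω, ∑ u ∈ D ω, w u = ∑ u, {ω | u ∈ D ω}.indicator (fun _ => w u) ω := by
    intro ω
    simp [Set.indicator_apply]
  simp_rw [hsum_indicator]
  rw [integral_add (integrable_const c)
      (integrable_finsetSum _ fun u _ => (integrable_const (w u)).indicator (hmem u)),
    integral_finsetSum _ fun u _ => (integrable_const (w u)).indicator (hmem u)]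
  simp [integral_indicator_const _ (hmem _), mul_comm]

end RandomFinset

theorem stmt_8 {N : Type*} [Fintype N] (f : Finset N → ℝ)
    (hsub : ∀ S T : Finset N, f (S ∪ T) + f (S ∩ T) ≤ f S + f T)
    (x : N → ℝ) (hx : ∀ u, 0 ≤ x u ∧ x u ≤ 1)
    {Ω : Type*} [MeasurableSpace Ω] (μ : Measure Ω) [IsProbabilityMeasure μ]
    (D : Ω → Finset N)
    (hDmeas : ∀ s : Finset N, MeasurableSet {ω | D ω = s})
    (hmarg : ∀ u : N, (μ {ω | u ∈ D ω}).toReal = x u) :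
    ∫ l in (0:ℝ)..1, f (Finset.univ.filter (fun u => l ≤ x u)) ≤ ∫ ω, f (D ω) ∂μ := by
  obtain ⟨r, hr, hrx⟩ := exists_injective_rank_antitone x
  have hlevel : ∀ l : ℝ, f (univ.filter fun u => l ≤ x u)
      = f ∅ + ∑ u ∈ univ.filter (fun u => l ≤ x u), greedyWeight f r u := fun l =>
    (add_sum_greedyWeight_eq f hr fun u hu v hvu =>
      mem_filter.mpr ⟨mem_univ v, (mem_filter.mp hu).2.trans (hrx v u hvu)⟩).symm
  calc ∫ l in (0:ℝ)..1, f (univ.filter fun u => l ≤ x u)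
      = f ∅ + ∑ u, greedyWeight f r u * x u := by
        simp_rw [hlevel]
        exact intervalIntegral_add_sum_filter_le _ _ _ hx
    _ = ∫ ω, (f ∅ + ∑ u ∈ D ω, greedyWeight f r u) ∂μ := by
        simp_rw [integral_add_sum_mem hDmeas, measureReal_def, hmarg]
    _ ≤ ∫ ω, f (D ω) ∂μ :=
        integral_mono
          (integrable_comp_of_measurableSet_eq hDmeas fun T => f ∅ + ∑ u ∈ T, greedyWeight f r u)
          (integrable_comp_of_measurableSet_eq hDmeas f)
          fun ω => add_sum_greedyWeight_le hsub hr (D ω)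
end

section
/- For every real t_s ∈ [0,1] and integer k ≥ 1, setting α = 1 − 1/k, it holds that ((k − ⌈t_s·k⌉)/k)·α^{k − ⌈t_s·k⌉ − 1} + α^{k − ⌈t_s·k⌉} − α^k ≥ (2 − t_s − e^{−t_s})·e^{t_s − 1} − 3/k. -/
/-!
With `j = k - ⌈t k⌉ ≤ (1 - t) k`, the bound `1 - 1/k ≥ exp (-1/(k-1))` gives
`α ^ j ≥ exp (-(1 - t) k/(k-1)) ≥ exp (t - 1) - 1/k`, while `α ^ k ≤ exp (-1)`.
As `j/k ≥ 1 - t - 1/k` and `α ^ (j-1) ≥ α ^ j`, the left side is at least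
`(2 - t - 1/k) (exp (t - 1) - 1/k) - exp (-1)`, and `exp (-t) exp (t - 1) = exp (-1)`.
-/

open Real

lemma Real.exp_one_sub_inv_le {x : ℝ} (hx : 0 < x) : exp (1 - x⁻¹) ≤ x :=
  calc exp (1 - x⁻¹) ≤ exp (log x) := exp_le_exp.2 (one_sub_inv_le_log_of_pos hx)
    _ = x := exp_log hx

lemma Real.exp_neg_sub_le_one_sub_one_div_pow {k s : ℝ} (hk : 1 < k) {j : ℕ}
    (hj : j ≤ s * k) : exp (-s) - exp (-1) / (k - 1) ≤ (1 - 1 / k) ^ j := by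
  have hk1 : 0 < k - 1 := by linarith
  have hα : exp (-(k - 1)⁻¹) ≤ 1 - 1 / k := by
    have hpos : 0 < 1 - 1 / k := by
      rw [sub_pos, div_lt_one (by linarith)]
      exact hk
    convert exp_one_sub_inv_le hpos using 2
    field_simp
    ring
  calc exp (-s) - exp (-1) / (k - 1) ≤ exp (-s) - s * exp (-s) / (k - 1) := by
        gcongr
        exact mul_exp_neg_le_exp_neg_one s
    _ = exp (-s) * (1 - s / (k - 1)) := by ring
    _ ≤ exp (-s) * exp (-(s / (k - 1))) := by
        gcongr
        linarith [add_one_le_exp (-(s / (k - 1)))]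
    _ = exp (-(s * k) * (k - 1)⁻¹) := by
        rw [← exp_add]
        congr 1
        field_simp
        ring
    _ ≤ exp (-j * (k - 1)⁻¹) := by gcongr
    _ = exp (-(k - 1)⁻¹) ^ j := by rw [← exp_nat_mul]; ring_nf
    _ ≤ (1 - 1 / k) ^ j := by gcongr

lemma Real.exp_neg_sub_one_div_le_one_sub_one_div_pow {k : ℕ} (hk : 1 ≤ k) {s : ℝ}
    (hs : 0 ≤ s) {j : ℕ} (hj : j ≤ s * k) : exp (-s) - 1 / k ≤ (1 - 1 / k) ^ j := by
  obtain rfl | hk2 := hk.eq_or_lt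
  · have : exp (-s) ≤ 1 := exp_le_one_iff.2 (by linarith)
    simp only [Nat.cast_one, div_one, sub_self]
    linarith [pow_nonneg (le_refl (0 : ℝ)) j]
  · have hk2 : (2 : ℝ) ≤ k := by exact_mod_cast hk2
    have : exp (-1) / (k - 1) ≤ 1 / k := by
      rw [div_le_div_iff₀ (by linarith) (by linarith)]
      nlinarith [exp_neg_one_lt_half]
    linarith [exp_neg_sub_le_one_sub_one_div_pow (by linarith) hj]

theorem stmt_10 (t_s : ℝ) (ht : 0 ≤ t_s ∧ t_s ≤ 1) (k : ℕ) (hk : 1 ≤ k)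
    (α : ℝ) (hα : α = 1 - 1 / k) :
    ((k : ℝ) - ⌈t_s * k⌉₊) / k * α ^ (k - ⌈t_s * (k : ℝ)⌉₊ - 1)
      + α ^ (k - ⌈t_s * (k : ℝ)⌉₊) - α ^ k
    ≥ (2 - t_s - Real.exp (-t_s)) * Real.exp (t_s - 1) - 3 / k := by
  obtain ⟨ht0, ht1⟩ := ht
  have hk1 : (1 : ℝ) ≤ k := by exact_mod_cast hk
  have hw : 0 < 1 / (k : ℝ) := by positivity
  set m := ⌈t_s * k⌉₊
  have hm_lo : t_s * k ≤ m := Nat.le_ceil _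
  have hm_hi : (m : ℝ) < t_s * k + 1 := Nat.ceil_lt_add_one (by positivity)
  have hj : ((k - m : ℕ) : ℝ) = k - m := Nat.cast_sub (Nat.ceil_le.2 (by nlinarith))
  set j := k - m
  have hα0 : 0 ≤ α := by rw [hα, sub_nonneg, div_le_one (by linarith)]; exact hk1
  have hα1 : α ≤ 1 := by rw [hα, sub_le_self_iff]; positivity
  have hαk : α ^ k ≤ exp (-1) := hα ▸ one_sub_div_pow_le_exp_neg hk1
  have hαj : exp (t_s - 1) - 1 / k ≤ α ^ j := by
    have h := exp_neg_sub_one_div_le_one_sub_one_div_pow hk (sub_nonneg.2 ht1) (j := j)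
      (by rw [hj]; linarith)
    rwa [neg_sub, ← hα] at h
  have hαj1 : α ^ j ≤ α ^ (j - 1) := pow_le_pow_of_le_one hα0 hα1 (Nat.sub_le j 1)
  have hjk : 1 - t_s - 1 / k ≤ j / k := by
    rw [show 1 - t_s - 1 / k = ((1 - t_s) * k - 1) / k by field_simp]
    gcongr
    linarith
  have hexp : exp (-t_s) * exp (t_s - 1) = exp (-1) := by rw [← exp_add]; ring_nf
  have hE : exp (t_s - 1) ≤ 1 := exp_le_one_iff.2 (by linarith)
  rw [← hj, ge_iff_le]
  calc (2 - t_s - exp (-t_s)) * exp (t_s - 1) - 3 / k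
      = (2 - t_s) * exp (t_s - 1) - 3 * (1 / k) - exp (-1) := by rw [← hexp]; ring
    _ ≤ (2 - t_s - 1 / k) * (exp (t_s - 1) - 1 / k) - exp (-1) := by
        nlinarith [mul_le_mul_of_nonneg_left hE hw.le, mul_nonneg ht0 hw.le]
    _ ≤ (j / k + 1) * α ^ j - α ^ k := by
        have : 0 ≤ 2 - t_s - 1 / k := by linarith [(div_le_one (by positivity)).2 hk1]
        nlinarith [mul_le_mul_of_nonneg_left hαj this, pow_nonneg hα0 j]
    _ ≤ j / k * α ^ (j - 1) + α ^ j - α ^ k := by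
        nlinarith [mul_le_mul_of_nonneg_left hαj1 (by positivity : (0 : ℝ) ≤ j / k)]
end
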